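/- Let A ∈ ℝ^{m×n} with rows a_1, ..., a_m, let I ⊆ {1,...,m}, and let D_I be the diagonal matrix with (D_I)_{ii} = 0 for i ∈ I and (D_I)_{ii} = 1 for i ∉ I. Fix k ∈ I with a_k ≠ 0 and suppose a_k lies in the orthogonal complement of the nullspace of D_I A, i.e., a_k ∈ 𝒩(D_I A)^⊥, and that D_I A ≠ 0. Let M = m − |I| and let c > 0 be a constant such that for all j ∉ I, |⟨a_j, a_k⟩| ≤ c · ‖a_k‖₂ / √M. Then the smallest nonzero singular value σ_K = min{σ_l : σ_l ≠ 0} of D_I A satisfies 0 < σ_K ≤ c. -/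

import Mathlib

/-!
Put `B = D_I A` and `v = a_k`. Expanding `v` in an orthonormal eigenbasis of `BᵀB`, the
hypothesis `v ⊥ 𝒩(B)` kills every coordinate along an eigenvalue `0`, and every nonzero eigenvalue
is at least `σ_K²`; hence `σ_K² ‖v‖² ≤ vᵀ BᵀB v = ‖B v‖²`. On the other hand
`‖B v‖² = ∑_{j ∉ I} ⟨a_j, v⟩² ≤ M · c² ‖v‖² / M = c² ‖v‖²`, so `σ_K ≤ c`.
-/

open Matrix

/-- The singular values of a real `m × n` matrix `B`, listed in decreasing order
`singularValues B 0 ≥ singularValues B 1 ≥ …` (`0`-indexed): namely, the square roots of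
the eigenvalues of `Bᵀ B` (which over `ℝ` is `Bᴴ B`), sorted decreasingly. -/
noncomputable def singularValues {m n : ℕ} (B : Matrix (Fin m) (Fin n) ℝ) : Fin n → ℝ :=
  fun k => Real.sqrt
    ((Matrix.isHermitian_conjTranspose_mul_self B).eigenvalues
      (Tuple.sort (Matrix.isHermitian_conjTranspose_mul_self B).eigenvalues k.rev))

def DI {m : ℕ} (I : Finset (Fin m)) : Matrix (Fin m) (Fin m) ℝ :=
  Matrix.diagonal fun i => if i ∈ I then 0 else 1

theorem OrthonormalBasis.sum_dotProduct_mul_dotProduct {ι n : Type*} [Fintype ι] [Fintype n]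
    (b : OrthonormalBasis ι ℝ (EuclideanSpace ℝ n)) (x y : n → ℝ) :
    ∑ i, (x ⬝ᵥ b i) * (y ⬝ᵥ b i) = x ⬝ᵥ y := by
  simpa [EuclideanSpace.inner_eq_star_dotProduct, dotProduct_comm, mul_comm] using
    b.sum_inner_mul_inner (WithLp.toLp 2 x) (WithLp.toLp 2 y)

theorem Matrix.IsHermitian.dotProduct_mulVec_eq_sum_eigenvalues {n : Type*} [Fintype n]
    [DecidableEq n] {G : Matrix n n ℝ} (hG : G.IsHermitian) (x : n → ℝ) :
    x ⬝ᵥ (G *ᵥ x) = ∑ i, hG.eigenvalues i * (x ⬝ᵥ hG.eigenvectorBasis i) ^ 2 := by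
  rw [← hG.eigenvectorBasis.sum_dotProduct_mul_dotProduct]
  refine Finset.sum_congr rfl fun i _ => ?_
  have hGsymm : Gᵀ = G := isHermitian_iff_isSymm.mp hG
  rw [dotProduct_comm (G *ᵥ x), dotProduct_mulVec, ← mulVec_transpose, hGsymm,
    hG.mulVec_eigenvectorBasis, smul_dotProduct, smul_eq_mul, dotProduct_comm x]
  ring

section SingularValues

variable {m n : ℕ} (B : Matrix (Fin m) (Fin n) ℝ)

noncomputable def minNonzeroSingularValue : ℝ :=
  sInf {σ : ℝ | ∃ l : Fin n, σ = singularValues B l ∧ σ ≠ 0}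

local notation "μ" => Matrix.IsHermitian.eigenvalues (isHermitian_conjTranspose_mul_self B)

theorem exists_singularValues_eq_sqrt_eigenvalues (i : Fin n) :
    ∃ l, singularValues B l = √(μ i) :=
  ⟨((Tuple.sort μ).symm i).rev, by simp [singularValues]⟩

theorem minNonzeroSingularValue_nonneg : 0 ≤ minNonzeroSingularValue B :=
  Real.sInf_nonneg fun _ ⟨_, hl, _⟩ => hl ▸ Real.sqrt_nonneg _

theorem sqrt_eigenvalues_mem_nonzero_singularValues {i : Fin n} (hi : μ i ≠ 0) :
    √(μ i) ∈ {σ : ℝ | ∃ l : Fin n, σ = singularValues B l ∧ σ ≠ 0} := by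
  obtain ⟨l, hl⟩ := exists_singularValues_eq_sqrt_eigenvalues B i
  exact ⟨l, hl.symm, Real.sqrt_ne_zero'.mpr
    (((posSemidef_conjTranspose_mul_self B).eigenvalues_nonneg i).lt_of_ne' hi)⟩

theorem sq_minNonzeroSingularValue_le_eigenvalues {i : Fin n} (hi : μ i ≠ 0) :
    minNonzeroSingularValue B ^ 2 ≤ μ i := by
  have hle : minNonzeroSingularValue B ≤ √(μ i) :=
    csInf_le ⟨0, fun _ ⟨_, hl, _⟩ => hl ▸ Real.sqrt_nonneg _⟩
      (sqrt_eigenvalues_mem_nonzero_singularValues B hi)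
  calc minNonzeroSingularValue B ^ 2 ≤ √(μ i) ^ 2 :=
        pow_le_pow_left₀ (minNonzeroSingularValue_nonneg B) hle 2
    _ = μ i := Real.sq_sqrt ((posSemidef_conjTranspose_mul_self B).eigenvalues_nonneg i)

theorem minNonzeroSingularValue_pos (hB : B ≠ 0) : 0 < minNonzeroSingularValue B := by
  set S := {σ : ℝ | ∃ l : Fin n, σ = singularValues B l ∧ σ ≠ 0}
  have hμ : μ ≠ 0 := by
    rwa [Ne, (isHermitian_conjTranspose_mul_self B).eigenvalues_eq_zero_iff,
      conjTranspose_mul_self_eq_zero]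
  obtain ⟨i, hi⟩ := Function.ne_iff.mp hμ
  have hS : S.Finite :=
    (Set.finite_range (singularValues B)).subset fun _ ⟨l, hl, _⟩ => ⟨l, hl.symm⟩
  obtain ⟨l, hl, hne⟩ : sInf S ∈ S :=
    Set.Nonempty.csInf_mem ⟨_, sqrt_eigenvalues_mem_nonzero_singularValues B hi⟩ hS
  exact (minNonzeroSingularValue_nonneg B).lt_of_ne' hne

theorem sq_minNonzeroSingularValue_mul_le {v : Fin n → ℝ}
    (hv : ∀ x, B *ᵥ x = 0 → v ⬝ᵥ x = 0) :
    minNonzeroSingularValue B ^ 2 * (v ⬝ᵥ v) ≤ (B *ᵥ v) ⬝ᵥ (B *ᵥ v) := by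
  set hG := isHermitian_conjTranspose_mul_self B
  have hBv : (B *ᵥ v) ⬝ᵥ (B *ᵥ v) = v ⬝ᵥ ((Bᴴ * B) *ᵥ v) := by
    rw [← mulVec_mulVec, Matrix.dotProduct_mulVec v Bᴴ, conjTranspose_eq_transpose_of_trivial,
      vecMul_transpose]
  rw [hBv, hG.dotProduct_mulVec_eq_sum_eigenvalues,
    ← hG.eigenvectorBasis.sum_dotProduct_mul_dotProduct, Finset.mul_sum]
  refine Finset.sum_le_sum fun i _ => ?_
  by_cases hi : μ i = 0
  · have hBb : B *ᵥ hG.eigenvectorBasis i = 0 := by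
      rw [← conjTranspose_mul_self_mulVec_eq_zero, hG.mulVec_eigenvectorBasis, hi, zero_smul]
    rw [hv _ hBb, hi]
    simp
  · rw [← sq]
    exact mul_le_mul_of_nonneg_right (sq_minNonzeroSingularValue_le_eigenvalues B hi) (sq_nonneg _)

end SingularValues

section RowRemoval

variable {m : ℕ} {n : Type*} [Fintype n] (I : Finset (Fin m)) (A : Matrix (Fin m) n ℝ)

theorem DI_mul_mulVec_apply (x : n → ℝ) (j : Fin m) :
    ((DI I * A) *ᵥ x) j = if j ∈ I then 0 else A j ⬝ᵥ x := by
  rw [← mulVec_mulVec]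
  by_cases hj : j ∈ I <;> simp [DI, mulVec, hj]

theorem dotProduct_self_DI_mul_mulVec_le {v : n → ℝ} {C : ℝ}
    (hcorr : ∀ j : Fin m, j ∉ I → |A j ⬝ᵥ v| ≤ C / √((m - I.card : ℕ) : ℝ)) :
    ((DI I * A) *ᵥ v) ⬝ᵥ ((DI I * A) *ᵥ v) ≤ C ^ 2 := by
  set M : ℝ := ((m - I.card : ℕ) : ℝ)
  have hrows : ((DI I * A) *ᵥ v) ⬝ᵥ ((DI I * A) *ᵥ v) = ∑ j ∈ Iᶜ, (A j ⬝ᵥ v) ^ 2 := by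
    rw [dotProduct, ← Finset.sum_compl_add_sum I, add_eq_left.mpr (Finset.sum_eq_zero
      fun j hj => by rw [DI_mul_mulVec_apply, if_pos hj, zero_mul])]
    refine Finset.sum_congr rfl fun j hj => ?_
    rw [DI_mul_mulVec_apply, if_neg (Finset.mem_compl.mp hj), sq]
  have hcard : (Iᶜ.card : ℝ) = M := by
    simp [M, Finset.card_compl]
  have hM : 0 ≤ M := Nat.cast_nonneg _
  have hterm : ∀ j ∈ Iᶜ, (A j ⬝ᵥ v) ^ 2 ≤ C ^ 2 / M := fun j hj => by
    rw [← sq_abs, ← Real.sq_sqrt hM, ← div_pow]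
    exact pow_le_pow_left₀ (abs_nonneg _) (hcorr j (Finset.mem_compl.mp hj)) 2
  calc ((DI I * A) *ᵥ v) ⬝ᵥ ((DI I * A) *ᵥ v) ≤ Iᶜ.card • (C ^ 2 / M) := by
        rw [hrows]; exact Finset.sum_le_card_nsmul _ _ _ hterm
    _ ≤ C ^ 2 := by
        rw [nsmul_eq_mul, hcard]
        rcases eq_or_ne M 0 with hM | hM
        · simp [hM, sq_nonneg]
        · rw [mul_div_cancel₀ _ hM]

end RowRemoval

theorem removal_of_weakly_correlated_rows_general {m n : ℕ} (A : Matrix (Fin m) (Fin n) ℝ)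
    (I : Finset (Fin m)) (k : Fin m) (hak : A k ≠ 0)
    (hperp : ∀ x : Fin n → ℝ, (DI I * A) *ᵥ x = 0 → A k ⬝ᵥ x = 0)
    (hDA : DI I * A ≠ 0) (c : ℝ) (hc : 0 < c)
    (hcorr : ∀ j : Fin m, j ∉ I →
      |A j ⬝ᵥ A k| ≤ c * Real.sqrt (A k ⬝ᵥ A k) / Real.sqrt ((m - I.card : ℕ) : ℝ)) :
    0 < sInf {σ : ℝ | ∃ l : Fin n, σ = singularValues (DI I * A) l ∧ σ ≠ 0} ∧
      sInf {σ : ℝ | ∃ l : Fin n, σ = singularValues (DI I * A) l ∧ σ ≠ 0} ≤ c := by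
  refine ⟨minNonzeroSingularValue_pos _ hDA, ?_⟩
  have hs : 0 < A k ⬝ᵥ A k := by
    simpa using dotProduct_star_self_pos_iff.mpr hak
  have key : minNonzeroSingularValue (DI I * A) ^ 2 * (A k ⬝ᵥ A k) ≤ c ^ 2 * (A k ⬝ᵥ A k) :=
    calc minNonzeroSingularValue (DI I * A) ^ 2 * (A k ⬝ᵥ A k)
        ≤ ((DI I * A) *ᵥ A k) ⬝ᵥ ((DI I * A) *ᵥ A k) := sq_minNonzeroSingularValue_mul_le _ hperp
      _ ≤ (c * √(A k ⬝ᵥ A k)) ^ 2 := dotProduct_self_DI_mul_mulVec_le I A hcorr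
      _ = c ^ 2 * (A k ⬝ᵥ A k) := by rw [mul_pow, Real.sq_sqrt hs.le]
  exact (pow_le_pow_iff_left₀ (minNonzeroSingularValue_nonneg _) hc.le two_ne_zero).mp
    (le_of_mul_le_mul_right key hs)

/-- **Removal of weakly correlated rows.**
Let `A ∈ ℝ^{m×n}` with rows `a_j = A j`, `I ⊆ [m]`, and fix `k ∈ I` with `a_k ≠ 0` and
`a_k ∈ 𝒩(D_I A)^⊥` (i.e. `a_k` is orthogonal to every vector in the nullspace of `D_I A`),
and `D_I A ≠ 0`.  If `|⟨a_j, a_k⟩| ≤ c ‖a_k‖₂ / √M` for all `j ∉ I`, where `M = m - |I|`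
and `c > 0`, then the smallest nonzero singular value `σ_K = min {σ_l : σ_l ≠ 0}` of
`D_I A` satisfies `0 < σ_K ≤ c`. -/
theorem removal_of_weakly_correlated_rows {m n : ℕ} (A : Matrix (Fin m) (Fin n) ℝ)
    (I : Finset (Fin m)) (k : Fin m) (hkI : k ∈ I) (hak : A k ≠ 0)
    (hperp : ∀ x : Fin n → ℝ, (DI I * A) *ᵥ x = 0 → A k ⬝ᵥ x = 0)
    (hDA : DI I * A ≠ 0) (c : ℝ) (hc : 0 < c)
    (hcorr : ∀ j : Fin m, j ∉ I →
      |A j ⬝ᵥ A k| ≤ c * Real.sqrt (A k ⬝ᵥ A k) / Real.sqrt ((m - I.card : ℕ) : ℝ)) :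
    0 < sInf {σ : ℝ | ∃ l : Fin n, σ = singularValues (DI I * A) l ∧ σ ≠ 0} ∧
      sInf {σ : ℝ | ∃ l : Fin n, σ = singularValues (DI I * A) l ∧ σ ≠ 0} ≤ c :=
  removal_of_weakly_correlated_rows_general A I k hak hperp hDA c hc hcorr
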